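/- arXiv:2404.02620 — 2 statements merged into one kernel-verified Lean document; each statement's English description precedes it below -/
import Mathlib

section
/- Let A be an n×m real matrix with n ≥ 2 and let D = D(A) be its (n−1)×m payoff difference matrix. There exists a mixed strategy x ∈ ℝᵐ (x ≥ 0 componentwise, ∑_{i=1}^m x_i = 1) with Ax = (c,…,c)ᵀ for some c ∈ ℝ if and only if for every vector v ∈ ℝ^{n−1} there exists a column d of D with vᵀd ≤ 0 (i.e., the union of the half spaces HS(d) over all columns d of D equals ℝ^{n−1}). -/
/-- The payoff difference matrix `D(A)`: row `k` is row `k` of `A` minus row `k+1`. -/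
def Dmat {n m : ℕ} (A : Matrix (Fin (n + 1)) (Fin m) ℝ) :
    Matrix (Fin n) (Fin m) ℝ :=
  fun k i => A k.castSucc i - A k.succ i

/-!
`A *ᵥ x` is a constant vector exactly when `D(A) *ᵥ x = 0`, so the theorem is Ville's alternative
for `D(A)`. If no probability vector `x` has `D(A) *ᵥ x = 0`, a hyperplane separates `0` from the
compact convex image of the simplex, and its normal `v` has `vᵀd > 0` for every column `d`;
conversely such a `v` would make `vᵀ D(A) x` both zero and positive.
-/

open Matrix

theorem Fin.exists_forall_eq_iff_forall_castSucc_eq_succ {α : Type*} {n : ℕ}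
    (y : Fin (n + 1) → α) : (∃ c, ∀ j, y j = c) ↔ ∀ k : Fin n, y k.castSucc = y k.succ := by
  refine ⟨fun ⟨c, hc⟩ k ↦ by rw [hc, hc], fun h ↦ ⟨y 0, fun j ↦ ?_⟩⟩
  induction j using Fin.induction with
  | zero => rfl
  | succ k ih => rw [← h k, ih]

theorem dotProduct_pos_of_mem_stdSimplex {κ : Type*} [Fintype κ] {w x : κ → ℝ}
    (hw : ∀ j, 0 < w j) (hx : x ∈ stdSimplex ℝ κ) : 0 < w ⬝ᵥ x := by
  obtain ⟨j, -, hj⟩ : ∃ j ∈ Finset.univ, (0 : κ → ℝ) j < x j :=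
    Finset.exists_lt_of_sum_lt (by simp [hx.2])
  exact Finset.sum_pos' (fun i _ ↦ mul_nonneg (hw i).le (hx.1 i))
    ⟨j, Finset.mem_univ j, mul_pos (hw j) hj⟩

/-- **Ville's theorem of the alternative**. -/
theorem Matrix.exists_mem_stdSimplex_mulVec_eq_zero_iff {ι κ : Type*} [Fintype ι] [Fintype κ]
    (M : Matrix ι κ ℝ) :
    (∃ x ∈ stdSimplex ℝ κ, M *ᵥ x = 0) ↔ ∀ v : ι → ℝ, ∃ j, (v ᵥ* M) j ≤ 0 := by
  classical
  constructor
  · rintro ⟨x, hx, hMx⟩ v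
    by_contra! hpos
    simpa [← dotProduct_mulVec, hMx] using dotProduct_pos_of_mem_stdSimplex hpos hx
  · intro hcover
    by_contra! hM
    have h0 : (0 : ι → ℝ) ∉ M.mulVecLin '' stdSimplex ℝ κ := fun ⟨x, hx, hMx⟩ ↦ hM x hx hMx
    obtain ⟨f, u, hf0, hfK⟩ := geometric_hahn_banach_point_closed
      ((convex_stdSimplex ℝ κ).linear_image M.mulVecLin)
      ((isCompact_stdSimplex ℝ κ).image M.mulVecLin.continuous_of_finiteDimensional).isClosed h0
    obtain ⟨v, hv⟩ := (dotProductEquiv ℝ ι).surjective f.toLinearMap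
    obtain ⟨j, hj⟩ := hcover v
    have hfj : f (M *ᵥ Pi.single j 1) = (v ᵥ* M) j := by
      rw [← ContinuousLinearMap.coe_coe, ← hv, dotProductEquiv_apply_apply, dotProduct_mulVec,
        dotProduct_single_one]
    have hu : u < (v ᵥ* M) j := hfj ▸ hfK _ ⟨_, single_mem_stdSimplex ℝ j, rfl⟩
    linarith [map_zero f]

theorem Dmat_mulVec {n m : ℕ} (A : Matrix (Fin (n + 1)) (Fin m) ℝ) (x : Fin m → ℝ) (k : Fin n) :
    (Dmat A *ᵥ x) k = (A *ᵥ x) k.castSucc - (A *ᵥ x) k.succ := by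
  simp [Dmat, mulVec, dotProduct, sub_mul]

theorem exists_forall_mulVec_eq_iff_Dmat_mulVec_eq_zero {n m : ℕ}
    (A : Matrix (Fin (n + 1)) (Fin m) ℝ) (x : Fin m → ℝ) :
    (∃ c, ∀ j, (A *ᵥ x) j = c) ↔ Dmat A *ᵥ x = 0 := by
  simp [Fin.exists_forall_eq_iff_forall_castSucc_eq_succ, funext_iff, Dmat_mulVec, sub_eq_zero]

/-- A player with `n × m` payoff matrix `A` (with `n ≥ 2`, here `n = n' + 2`) can be made
indifferent between all pure strategies by some mixed strategy of the opponent if and only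
if the union of the half spaces induced by the columns of `D(A)` is all of `ℝ^{n-1}`,
i.e., for every `v ∈ ℝ^{n-1}` there is a column `d` of `D(A)` with `vᵀd ≤ 0`. -/
theorem indifference_iff_halfspaces_cover {n' m : ℕ}
    (A : Matrix (Fin (n' + 2)) (Fin m) ℝ) :
    (∃ x : Fin m → ℝ, (∀ i, 0 ≤ x i) ∧ (∑ i, x i = 1) ∧
        ∃ c : ℝ, ∀ j, A.mulVec x j = c) ↔
      ∀ v : Fin (n' + 1) → ℝ, ∃ i : Fin m, ∑ k, v k * Dmat A k i ≤ 0 := by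
  simp_rw [exists_forall_mulVec_eq_iff_Dmat_mulVec_eq_zero, ← and_assoc]
  exact (Dmat A).exists_mem_stdSimplex_mulVec_eq_zero_iff
end

section
/- Let a₁, a₂, a₃ ∈ (0,1) and let A₃ = [[a₁, 1, 0], [0, a₂, 1], [1, 0, a₃]]. Then the symmetric game with payoff matrix A₃ has exactly one symmetric Nash equilibrium x in the standard simplex of ℝ³, and this x has all three coordinates strictly positive. -/
/-! A symmetric Nash equilibrium `x` puts no weight on a pure strategy that earns strictly less
against `x` than another one. If `x₀ = 0`, strategy 1 earns `a₂x₁ + x₂ > a₃x₂`, the payoff of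
strategy 2, so `x₂ = 0`; in the same way `x₂ = 0` forces `x₁ = 0` and `x₁ = 0` forces `x₀ = 0`.
So an equilibrium missing one strategy misses all three, which is absurd. In a completely
mixed equilibrium all pure strategies earn the same payoff, and together with `∑ xⱼ = 1` this
is a nonsingular linear system for `x`. -/

/-- `x` is a symmetric Nash equilibrium of the symmetric game with payoff matrix `A`:
`x` lies in the standard simplex of `ℝ³` and `xᵀAx ≥ yᵀAx` for all `y` in the simplex. -/
def IsSymNash (A : Matrix (Fin 3) (Fin 3) ℝ) (x : Fin 3 → ℝ) : Prop :=
  (∀ j, 0 ≤ x j) ∧ (∑ j, x j = 1) ∧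
    ∀ y : Fin 3 → ℝ, (∀ j, 0 ≤ y j) → (∑ j, y j = 1) →
      dotProduct y (A.mulVec x) ≤ dotProduct x (A.mulVec x)

open Matrix

section SymNash

variable {A : Matrix (Fin 3) (Fin 3) ℝ} {x : Fin 3 → ℝ}

theorem isSymNash_of_mulVec_eq_const (hx : ∀ j, 0 ≤ x j) (hsum : ∑ j, x j = 1) (c : ℝ)
    (hc : ∀ i, (A *ᵥ x) i = c) : IsSymNash A x := by
  have dotProduct_eq (y : Fin 3 → ℝ) (hy : ∑ j, y j = 1) : y ⬝ᵥ (A *ᵥ x) = c := by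
    simp only [dotProduct, hc, ← Finset.sum_mul, hy, one_mul]
  exact ⟨hx, hsum, fun y _ hy ↦ ((dotProduct_eq y hy).trans (dotProduct_eq x hsum).symm).le⟩

namespace IsSymNash

theorem mulVec_le (h : IsSymNash A x) (i : Fin 3) : (A *ᵥ x) i ≤ x ⬝ᵥ (A *ᵥ x) := by
  have := h.2.2 (Pi.single i 1) (fun j ↦ by by_cases hj : j = i <;> simp [hj]) (by simp)
  rwa [single_dotProduct, one_mul] at this

theorem mulVec_eq_of_pos (h : IsSymNash A x) {i : Fin 3} (hi : 0 < x i) :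
    (A *ᵥ x) i = x ⬝ᵥ (A *ᵥ x) := by
  set w := x ⬝ᵥ (A *ᵥ x)
  have hterm (j : Fin 3) : 0 ≤ x j * (w - (A *ᵥ x) j) :=
    mul_nonneg (h.1 j) (sub_nonneg.2 (h.mulVec_le j))
  have hzero : ∑ j, x j * (w - (A *ᵥ x) j) = 0 := by
    simp only [mul_sub, Finset.sum_sub_distrib, ← Finset.sum_mul, h.2.1, one_mul]
    exact sub_self w
  have := (Finset.sum_eq_zero_iff_of_nonneg fun j _ ↦ hterm j).1 hzero i (Finset.mem_univ i)
  linarith [(mul_eq_zero.1 this).resolve_left hi.ne']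

theorem eq_zero_of_mulVec_lt (h : IsSymNash A x) {i j : Fin 3} (hij : (A *ᵥ x) i < (A *ᵥ x) j) :
    x i = 0 :=
  (h.1 i).eq_or_lt.elim Eq.symm fun hi ↦ by
    linarith [h.mulVec_eq_of_pos hi, h.mulVec_le j]

end IsSymNash

end SymNash

theorem mul_add_mul_pos {α : Type*} [Semiring α] [LinearOrder α] [IsStrictOrderedRing α]
    {p q s t : α} (hp : 0 < p) (hq : 0 < q) (hs : 0 ≤ s) (ht : 0 ≤ t) (hst : 0 < s + t) :
    0 < p * s + q * t := by
  rcases hs.eq_or_lt with rfl | hs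
  · simpa using mul_pos hq (by simpa using hst)
  · exact add_pos_of_pos_of_nonneg (mul_pos hp hs) (mul_nonneg hq.le ht)

section ClassA3

variable {a₁ a₂ a₃ : ℝ}

def classA3Matrix (a₁ a₂ a₃ : ℝ) : Matrix (Fin 3) (Fin 3) ℝ := !![a₁, 1, 0; 0, a₂, 1; 1, 0, a₃]

theorem classA3Matrix_mulVec (x : Fin 3 → ℝ) :
    classA3Matrix a₁ a₂ a₃ *ᵥ x = ![a₁ * x 0 + x 1, a₂ * x 1 + x 2, x 0 + a₃ * x 2] := by
  ext i
  fin_cases i <;> simp [classA3Matrix, mulVec, dotProduct, Fin.sum_univ_three]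

-- `adj A₃ *ᵥ 1`, so `A₃` maps it to the constant vector `det A₃ = 1 + a₁a₂a₃`.
def classA3Weights (a₁ a₂ a₃ : ℝ) : Fin 3 → ℝ :=
  ![1 - a₃ + a₂ * a₃, 1 - a₁ + a₁ * a₃, 1 - a₂ + a₁ * a₂]

noncomputable def classA3Equilibrium (a₁ a₂ a₃ : ℝ) : Fin 3 → ℝ :=
  (∑ j, classA3Weights a₁ a₂ a₃ j)⁻¹ • classA3Weights a₁ a₂ a₃

variable (h₁ : a₁ ∈ Set.Ioo (0 : ℝ) 1) (h₂ : a₂ ∈ Set.Ioo (0 : ℝ) 1) (h₃ : a₃ ∈ Set.Ioo (0 : ℝ) 1)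
include h₁ h₂ h₃

theorem classA3Weights_pos (i : Fin 3) : 0 < classA3Weights a₁ a₂ a₃ i := by
  fin_cases i
  · show 0 < 1 - a₃ + a₂ * a₃
    linarith [mul_pos h₂.1 h₃.1, h₃.2]
  · show 0 < 1 - a₁ + a₁ * a₃
    linarith [mul_pos h₁.1 h₃.1, h₁.2]
  · show 0 < 1 - a₂ + a₁ * a₂
    linarith [mul_pos h₁.1 h₂.1, h₂.2]

theorem sum_classA3Weights_pos : 0 < ∑ j, classA3Weights a₁ a₂ a₃ j :=
  Finset.sum_pos (fun j _ ↦ classA3Weights_pos h₁ h₂ h₃ j) Finset.univ_nonempty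

theorem classA3Equilibrium_pos (i : Fin 3) : 0 < classA3Equilibrium a₁ a₂ a₃ i :=
  mul_pos (inv_pos.2 (sum_classA3Weights_pos h₁ h₂ h₃)) (classA3Weights_pos h₁ h₂ h₃ i)

omit h₁ h₂ h₃ in
theorem classA3Matrix_mulVec_classA3Weights (i : Fin 3) :
    (classA3Matrix a₁ a₂ a₃ *ᵥ classA3Weights a₁ a₂ a₃) i = 1 + a₁ * a₂ * a₃ := by
  fin_cases i <;>
    simp only [classA3Matrix_mulVec, classA3Weights, Fin.zero_eta, Fin.mk_one, Fin.reduceFinMk,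
      Fin.isValue, cons_val_zero, cons_val_one, cons_val] <;> ring

theorem isSymNash_classA3Equilibrium :
    IsSymNash (classA3Matrix a₁ a₂ a₃) (classA3Equilibrium a₁ a₂ a₃) := by
  refine isSymNash_of_mulVec_eq_const (fun j ↦ (classA3Equilibrium_pos h₁ h₂ h₃ j).le) ?_
    ((∑ j, classA3Weights a₁ a₂ a₃ j)⁻¹ * (1 + a₁ * a₂ * a₃)) fun i ↦ ?_
  · simp only [classA3Equilibrium, Pi.smul_apply, smul_eq_mul, ← Finset.mul_sum]
    exact inv_mul_cancel₀ (sum_classA3Weights_pos h₁ h₂ h₃).ne'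
  · rw [classA3Equilibrium, mulVec_smul, Pi.smul_apply, classA3Matrix_mulVec_classA3Weights,
      smul_eq_mul]

theorem eq_classA3Equilibrium_of_mulVec_eq {y : Fin 3 → ℝ} (hsum : ∑ j, y j = 1)
    (h₀₂ : (classA3Matrix a₁ a₂ a₃ *ᵥ y) 0 = (classA3Matrix a₁ a₂ a₃ *ᵥ y) 2)
    (h₁₂ : (classA3Matrix a₁ a₂ a₃ *ᵥ y) 1 = (classA3Matrix a₁ a₂ a₃ *ᵥ y) 2) :
    y = classA3Equilibrium a₁ a₂ a₃ := by
  set D := ∑ j, classA3Weights a₁ a₂ a₃ j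
  simp only [classA3Matrix_mulVec, cons_val_zero, cons_val_one, cons_val_two, head_cons,
    tail_cons] at h₀₂ h₁₂
  rw [Fin.sum_univ_three] at hsum
  have hD : D = 3 - a₁ - a₂ - a₃ + a₁ * a₂ + a₁ * a₃ + a₂ * a₃ := by
    simp only [D, Fin.sum_univ_three, classA3Weights, Fin.isValue, cons_val_zero, cons_val_one,
      cons_val]
    ring
  suffices hyD : ∀ i, y i * D = classA3Weights a₁ a₂ a₃ i by
    ext i
    rw [classA3Equilibrium, Pi.smul_apply, smul_eq_mul, ← hyD, mul_comm,
      mul_inv_cancel_right₀ (sum_classA3Weights_pos h₁ h₂ h₃).ne']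
  intro i
  fin_cases i
  · show y 0 * D = 1 - a₃ + a₂ * a₃
    rw [hD]
    linear_combination (a₂ + a₃ - 1) * h₀₂ - (1 + a₃) * h₁₂ + (1 - a₃ + a₂ * a₃) * hsum
  · show y 1 * D = 1 - a₁ + a₁ * a₃
    rw [hD]
    linear_combination (2 - a₃) * h₀₂ + (a₁ + a₃ - 1) * h₁₂ + (1 - a₁ + a₁ * a₃) * hsum
  · show y 2 * D = 1 - a₂ + a₁ * a₂
    rw [hD]
    linear_combination -(1 + a₂) * h₀₂ + (2 - a₁) * h₁₂ + (1 - a₂ + a₁ * a₂) * hsum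

theorem IsSymNash.pos_of_classA3Matrix {x : Fin 3 → ℝ} (h : IsSymNash (classA3Matrix a₁ a₂ a₃) x)
    (i : Fin 3) : 0 < x i := by
  have hsum := h.2.1
  rw [Fin.sum_univ_three] at hsum
  have hx := h.1
  have h₀₂ : x 0 = 0 → x 2 = 0 := fun h0 ↦ h.eq_zero_of_mulVec_lt (j := 1) <| by
    simp only [classA3Matrix_mulVec, cons_val_zero, cons_val_one, cons_val_two, head_cons,
      tail_cons, h0]
    linarith [mul_add_mul_pos h₂.1 (sub_pos.2 h₃.2) (hx 1) (hx 2) (by linarith)]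
  have h₂₁ : x 2 = 0 → x 1 = 0 := fun h2 ↦ h.eq_zero_of_mulVec_lt (j := 0) <| by
    simp only [classA3Matrix_mulVec, cons_val_zero, cons_val_one, h2]
    linarith [mul_add_mul_pos h₁.1 (sub_pos.2 h₂.2) (hx 0) (hx 1) (by linarith)]
  have h₁₀ : x 1 = 0 → x 0 = 0 := fun h1 ↦ h.eq_zero_of_mulVec_lt (j := 2) <| by
    simp only [classA3Matrix_mulVec, cons_val_zero, cons_val_two, head_cons, tail_cons, h1]
    linarith [mul_add_mul_pos h₃.1 (sub_pos.2 h₁.2) (hx 2) (hx 0) (by linarith)]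
  refine (hx i).lt_of_ne fun hi ↦ ?_
  fin_cases i <;> grind

theorem IsSymNash.eq_classA3Equilibrium {y : Fin 3 → ℝ} (h : IsSymNash (classA3Matrix a₁ a₂ a₃) y) :
    y = classA3Equilibrium a₁ a₂ a₃ := by
  have payoff (i : Fin 3) := h.mulVec_eq_of_pos (h.pos_of_classA3Matrix h₁ h₂ h₃ i)
  exact eq_classA3Equilibrium_of_mulVec_eq h₁ h₂ h₃ h.2.1 ((payoff 0).trans (payoff 2).symm)
    ((payoff 1).trans (payoff 2).symm)

end ClassA3

/-- The symmetric game with the given payoff matrix has exactly one symmetric Nash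
equilibrium, and it is completely mixed. -/
theorem classA3_unique_completely_mixed (a₁ a₂ a₃ : ℝ)
    (h₁ : a₁ ∈ Set.Ioo (0:ℝ) 1) (h₂ : a₂ ∈ Set.Ioo (0:ℝ) 1) (h₃ : a₃ ∈ Set.Ioo (0:ℝ) 1) :
    ∃ x : Fin 3 → ℝ, IsSymNash !![a₁, 1, 0; 0, a₂, 1; 1, 0, a₃] x ∧ (∀ j, 0 < x j) ∧
      ∀ y : Fin 3 → ℝ, IsSymNash !![a₁, 1, 0; 0, a₂, 1; 1, 0, a₃] y → y = x :=
  ⟨classA3Equilibrium a₁ a₂ a₃, isSymNash_classA3Equilibrium h₁ h₂ h₃,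
    classA3Equilibrium_pos h₁ h₂ h₃, fun _ hy ↦ hy.eq_classA3Equilibrium h₁ h₂ h₃⟩
end
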